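/- arXiv:2207.05327 — 5 statements merged into one kernel-verified Lean document; each statement's English description precedes it below -/
import Mathlib

section
/- Let f : ℝ^d → 𝒴 be any deterministic function into a finite set of classes 𝒴, let μ ∈ ℝ^d and λ₁,…,λ_d > 0, and let ε be a random vector in ℝ^d whose i-th coordinate is an independent Laplace random variable with location μ_i and scale λ_i. Suppose that for a specific x ∈ ℝ^d there exist a class c_A ∈ 𝒴 and reals p_A, p_B ∈ [0,1] such that P(f(x+ε)=c_A) ≥ p_A ≥ p_B ≥ max_{c ≠ c_A} P(f(x+ε)=c). Then for every δ ∈ ℝ^d with ‖δ‖₁ < R, where R = max{ (1/2)·(min_i λ_i)·log(p_A/p_B), −(min_i λ_i)·log(1 − p_A + p_B) }, one has P(f(x+δ+ε)=c_A) > P(f(x+δ+ε)=c) for all c ≠ c_A. -/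
/-!
By the triangle inequality the Laplace density satisfies `p(z - a) ≤ exp(|a|/λ) p(z)`, so the
noise `P` and its translate `Q` by `δ` dominate each other up to the factor `exp t`, where
`t = ∑ |δᵢ|/λᵢ ≤ ‖δ‖₁ / min λ`. Hence `Q(c) ≤ exp t · p_B`, while `Q(c_A)` is at least both
`exp(-t) · p_A` and, passing to the complement, `1 - exp t · (1 - p_A)`. The first bound wins when
`exp(2t) p_B < p_A` and the second when `exp t · (1 - p_A + p_B) < 1`: these are the two terms of
the radius.
-/

open MeasureTheory ProbabilityTheory

/-- The Laplace measure on `ℝ` with location `m` and scale `l`, given by the density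
`z ↦ (1/(2l)) · exp(−|z − m|/l)` with respect to Lebesgue measure. -/
noncomputable def laplaceReal (m l : ℝ) : Measure ℝ :=
  volume.withDensity fun z => ENNReal.ofReal ((2 * l)⁻¹ * Real.exp (-|z - m| / l))

open Real Set
open scoped ENNReal

noncomputable def laplacePDFReal (m l z : ℝ) : ℝ := (2 * l)⁻¹ * exp (-|z - m| / l)

noncomputable def laplacePDF (m l z : ℝ) : ℝ≥0∞ := ENNReal.ofReal (laplacePDFReal m l z)

lemma laplaceReal_eq_withDensity (m l : ℝ) :
    laplaceReal m l = volume.withDensity (laplacePDF m l) := rfl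

@[fun_prop]
lemma measurable_laplacePDF (m l : ℝ) : Measurable (laplacePDF m l) := by
  unfold laplacePDF laplacePDFReal
  fun_prop

lemma integral_laplacePDFReal_eq_one (m : ℝ) {l : ℝ} (hl : 0 < l) :
    ∫ z, laplacePDFReal m l z = 1 := by
  simp only [laplacePDFReal, integral_const_mul,
    integral_sub_right_eq_self (fun z => exp (-|z| / l)),
    integral_comp_abs (f := fun z => exp (-z / l))]
  simp_rw [neg_div, div_eq_inv_mul, ← neg_mul]
  rw [integral_exp_mul_Ioi (by simpa using hl) 0]
  field_simp
  simp

lemma lintegral_laplacePDF_eq_one (m : ℝ) {l : ℝ} (hl : 0 < l) :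
    ∫⁻ z, laplacePDF m l z = 1 := by
  have h := integral_laplacePDFReal_eq_one m hl
  unfold laplacePDF
  rw [← ofReal_integral_eq_lintegral_ofReal
    (Integrable.of_integral_ne_zero (by simp [h])) (ae_of_all _ fun z => by
      unfold laplacePDFReal; positivity), h, ENNReal.ofReal_one]

lemma isProbabilityMeasure_laplaceReal (m : ℝ) {l : ℝ} (hl : 0 < l) :
    IsProbabilityMeasure (laplaceReal m l) :=
  ⟨by rw [laplaceReal_eq_withDensity, withDensity_apply _ MeasurableSet.univ,
    Measure.restrict_univ, lintegral_laplacePDF_eq_one m hl]⟩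

lemma laplacePDFReal_neg_add_le (m : ℝ) {l : ℝ} (hl : 0 < l) (a z : ℝ) :
    laplacePDFReal m l (-a + z) ≤ exp (|a| / l) * laplacePDFReal m l z := by
  have htri : |z - m| ≤ |-a + z - m| + |a| := by
    simpa [add_comm] using abs_sub_le (z - m) (-a + z - m) 0
  unfold laplacePDFReal
  rw [mul_left_comm, ← exp_add]
  gcongr
  rw [← add_div, div_le_div_iff_of_pos_right hl]
  linarith

lemma laplacePDF_neg_add_le (m : ℝ) {l : ℝ} (hl : 0 < l) (a z : ℝ) :
    laplacePDF m l (-a + z) ≤ ENNReal.ofReal (exp (|a| / l)) * laplacePDF m l z := by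
  rw [laplacePDF, laplacePDF, ← ENNReal.ofReal_mul (exp_pos _).le]
  exact ENNReal.ofReal_le_ofReal (laplacePDFReal_neg_add_le m hl a z)

namespace MeasureTheory

theorem lintegral_fin_nat_prod_eq_prod {n : ℕ} {E : Fin n → Type*}
    {mE : ∀ i, MeasurableSpace (E i)} {μ : (i : Fin n) → Measure (E i)} [∀ i, SigmaFinite (μ i)]
    {f : (i : Fin n) → E i → ℝ≥0∞} (hf : ∀ i, Measurable (f i)) :
    ∫⁻ x, ∏ i, f i (x i) ∂Measure.pi μ = ∏ i, ∫⁻ x, f i x ∂μ i := by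
  induction n with
  | zero => simp
  | succ n ih =>
    rw [← ((measurePreserving_piFinSuccAbove μ 0).symm).lintegral_comp_emb
      (MeasurableEquiv.measurableEmbedding _)]
    simp_rw [MeasurableEquiv.piFinSuccAbove_symm_apply, Fin.prod_univ_succAbove _ 0,
      Fin.insertNthEquiv, Equiv.coe_fn_mk, Fin.insertNth_apply_same,
      Fin.insertNth_apply_succAbove]
    have hg : Measurable fun y : (∀ j, E (Fin.succAbove 0 j)) => ∏ j, f _ (y j) :=
      Finset.measurable_prod _ fun j _ => (hf _).comp (measurable_pi_apply j)
    rw [lintegral_prod_mul (hf 0).aemeasurable hg.aemeasurable, ih fun j => hf _]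

theorem lintegral_fintype_prod_eq_prod {ι : Type*} [Fintype ι] {E : ι → Type*}
    {mE : ∀ i, MeasurableSpace (E i)} {μ : (i : ι) → Measure (E i)} [∀ i, SigmaFinite (μ i)]
    {f : (i : ι) → E i → ℝ≥0∞} (hf : ∀ i, Measurable (f i)) :
    ∫⁻ x, ∏ i, f i (x i) ∂Measure.pi μ = ∏ i, ∫⁻ x, f i x ∂μ i := by
  let e := (Fintype.equivFin ι).symm
  rw [← (measurePreserving_piCongrLeft μ e).lintegral_comp_emb
    (MeasurableEquiv.measurableEmbedding _)]
  simp_rw [← e.prod_comp, MeasurableEquiv.coe_piCongrLeft, Equiv.piCongrLeft_apply_apply]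
  exact lintegral_fin_nat_prod_eq_prod fun i => hf (e i)

theorem Measure.pi_withDensity {ι : Type*} [Fintype ι] {E : ι → Type*}
    [∀ i, MeasurableSpace (E i)] (μ : (i : ι) → Measure (E i)) [∀ i, SigmaFinite (μ i)]
    {f : (i : ι) → E i → ℝ≥0∞} (hf : ∀ i, Measurable (f i))
    [∀ i, SigmaFinite ((μ i).withDensity (f i))] :
    Measure.pi (fun i => (μ i).withDensity (f i)) =
      (Measure.pi μ).withDensity fun x => ∏ i, f i (x i) := by
  refine Measure.pi_eq fun s hs => ?_
  have hbox : (univ.pi s).indicator (fun x => ∏ i, f i (x i)) =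
      fun x => ∏ i, (s i).indicator (f i) (x i) := by
    ext x
    classical
    simp only [Set.indicator_apply, mem_univ_pi]
    exact Fintype.prod_ite_zero.symm
  rw [withDensity_apply _ (MeasurableSet.univ_pi hs), ← lintegral_indicator (.univ_pi hs), hbox,
    lintegral_fintype_prod_eq_prod fun i => (hf i).indicator (hs i)]
  simp_rw [lintegral_indicator (hs _), withDensity_apply _ (hs _)]

end MeasureTheory

section AddGroup

variable {G : Type*} [MeasurableSpace G] [AddGroup G] [MeasurableAdd G]
  (μ : Measure G) [μ.IsAddLeftInvariant] {D : G → ℝ≥0∞}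

theorem map_add_left_withDensity (hD : Measurable D) (a : G) :
    (μ.withDensity D).map (a + ·) = μ.withDensity fun y => D (-a + y) := by
  ext s hs
  rw [Measure.map_apply (measurable_const_add a) hs,
    withDensity_apply _ (measurable_const_add a hs), withDensity_apply _ hs,
    ← (measurePreserving_add_left μ a).setLIntegral_comp_preimage hs
      (f := fun y => D (-a + y)) (hD.comp (measurable_const_add (-a)))]
  simp

theorem map_add_left_withDensity_le (hD : Measurable D) (a : G) {c : ℝ≥0∞}
    (h : ∀ y, D (-a + y) ≤ c * D y) :
    (μ.withDensity D).map (a + ·) ≤ c • μ.withDensity D := by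
  rw [map_add_left_withDensity μ hD, ← withDensity_smul c hD]
  exact withDensity_mono (ae_of_all _ h)

end AddGroup

section PiLaplace

variable {ι : Type*} [Fintype ι] (μ lam : ι → ℝ)

theorem pi_laplaceReal_eq_withDensity (hlam : ∀ i, 0 < lam i) :
    Measure.pi (fun i => laplaceReal (μ i) (lam i)) =
      volume.withDensity fun x => ∏ i, laplacePDF (μ i) (lam i) (x i) := by
  have := fun i => isProbabilityMeasure_laplaceReal (μ i) (hlam i)
  rw [volume_pi]
  exact Measure.pi_withDensity _ fun i => measurable_laplacePDF _ _

theorem map_add_pi_laplaceReal_le (hlam : ∀ i, 0 < lam i) (a : ι → ℝ) :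
    (Measure.pi fun i => laplaceReal (μ i) (lam i)).map (a + ·) ≤
      ENNReal.ofReal (exp (∑ i, |a i| / lam i)) •
        Measure.pi fun i => laplaceReal (μ i) (lam i) := by
  rw [pi_laplaceReal_eq_withDensity μ lam hlam]
  refine map_add_left_withDensity_le _ (by fun_prop) a fun y => ?_
  show ∏ i, laplacePDF (μ i) (lam i) (-a i + y i) ≤ _
  calc _ ≤ ∏ i, ENNReal.ofReal (exp (|a i| / lam i)) * laplacePDF (μ i) (lam i) (y i) :=
        Finset.prod_le_prod' fun i _ => laplacePDF_neg_add_le _ (hlam i) _ _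
    _ = ENNReal.ofReal (exp (∑ i, |a i| / lam i)) * ∏ i, laplacePDF (μ i) (lam i) (y i) := by
        rw [Finset.prod_mul_distrib, ← ENNReal.ofReal_prod_of_nonneg fun _ _ => (exp_pos _).le,
          ← exp_sum]

theorem pi_laplaceReal_le_map_add (hlam : ∀ i, 0 < lam i) (a : ι → ℝ) :
    Measure.pi (fun i => laplaceReal (μ i) (lam i)) ≤
      ENNReal.ofReal (exp (∑ i, |a i| / lam i)) •
        (Measure.pi fun i => laplaceReal (μ i) (lam i)).map (a + ·) := by
  set P := Measure.pi fun i => laplaceReal (μ i) (lam i)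
  calc P = (P.map (-a + ·)).map (a + ·) := by
        rw [Measure.map_map (measurable_const_add a) (measurable_const_add (-a)),
          show ((a + ·) ∘ (-a + ·)) = id from funext (add_neg_cancel_left a), Measure.map_id]
    _ ≤ (ENNReal.ofReal (exp (∑ i, |a i| / lam i)) • P).map (a + ·) := by
        refine Measure.map_mono ?_ (measurable_const_add a)
        simpa only [Pi.neg_apply, abs_neg] using map_add_pi_laplaceReal_le μ lam hlam (-a)
    _ = _ := Measure.map_smul _ _ _

end PiLaplace

section Separation

variable {Ω : Type*} [MeasurableSpace Ω] {P Q : Measure Ω}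

lemma measureReal_le_mul_of_le_smul [IsFiniteMeasure P] {r : ℝ} (hr : 0 ≤ r)
    (h : Q ≤ ENNReal.ofReal r • P) (s : Set Ω) : Q.real s ≤ r * P.real s := by
  have := ENNReal.toReal_mono (ENNReal.mul_ne_top ENNReal.ofReal_ne_top (measure_ne_top P s)) (h s)
  rwa [ENNReal.toReal_mul, ENNReal.toReal_ofReal hr] at this

theorem measureReal_lt_of_le_exp_smul [IsProbabilityMeasure P] [IsProbabilityMeasure Q] {t : ℝ}
    (hQP : Q ≤ ENNReal.ofReal (exp t) • P) (hPQ : P ≤ ENNReal.ofReal (exp t) • Q)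
    {A C : Set Ω} (hA : MeasurableSet A) {pA pB : ℝ} (hpA : pA ≤ P.real A) (hpB : P.real C ≤ pB)
    (h : exp (2 * t) * pB < pA ∨ exp t * (1 - pA + pB) < 1) :
    Q.real C < Q.real A := by
  have hQC : Q.real C ≤ exp t * pB :=
    (measureReal_le_mul_of_le_smul (exp_pos t).le hQP C).trans (by gcongr)
  rcases h with h | h
  · have hPA := measureReal_le_mul_of_le_smul (exp_pos t).le hPQ A
    refine lt_of_mul_lt_mul_left ?_ (exp_pos t).le
    calc exp t * Q.real C ≤ exp t * (exp t * pB) := by gcongr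
      _ = exp (2 * t) * pB := by rw [two_mul, exp_add, mul_assoc]
      _ < exp t * Q.real A := h.trans_le (hpA.trans hPA)
  · have hQAc := measureReal_le_mul_of_le_smul (exp_pos t).le hQP Aᶜ
    rw [probReal_compl_eq_one_sub hA, probReal_compl_eq_one_sub hA] at hQAc
    calc Q.real C ≤ exp t * pB := hQC
      _ < 1 - exp t * (1 - pA) := by linarith
      _ ≤ 1 - exp t * (1 - P.real A) := by gcongr
      _ ≤ Q.real A := by linarith

end Separation

lemma exp_two_mul_mul_lt_of_lt_half_log {t a b : ℝ} (ht : 0 ≤ t) (hb : 0 ≤ b) (hba : b ≤ a)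
    (h : t < 1 / 2 * log (a / b)) : exp (2 * t) * b < a := by
  rcases hb.eq_or_lt with rfl | hb
  · simp only [div_zero, log_zero, mul_zero] at h
    linarith
  · rw [← lt_div_iff₀ hb, ← exp_log (div_pos (hb.trans_le hba) hb)]
    exact exp_lt_exp.2 (by linarith)

lemma exp_mul_lt_one_of_lt_neg_log {t q : ℝ} (h : t < -log q) : exp t * q < 1 := by
  rcases le_or_gt q 0 with hq | hq
  · nlinarith [exp_pos t]
  · calc exp t * q < exp (-log q) * q := by gcongr
      _ = 1 := by rw [exp_neg, exp_log hq, inv_mul_cancel₀ hq.ne']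

lemma exp_two_mul_mul_lt_or_exp_mul_lt_one {t r L pA pB : ℝ} (ht : 0 ≤ t) (hpB : 0 ≤ pB)
    (hAB : pB ≤ pA) (hL : 0 < L) (htr : t ≤ r / L)
    (hr : r < max (1 / 2 * L * log (pA / pB)) (-L * log (1 - pA + pB))) :
    exp (2 * t) * pB < pA ∨ exp t * (1 - pA + pB) < 1 := by
  rcases lt_max_iff.mp hr with h | h
  · refine .inl (exp_two_mul_mul_lt_of_lt_half_log ht hpB hAB (htr.trans_lt ?_))
    rw [div_lt_iff₀ hL]
    linarith
  · refine .inr (exp_mul_lt_one_of_lt_neg_log (htr.trans_lt ?_))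
    rw [div_lt_iff₀ hL]
    linarith

lemma sum_abs_div_le_sum_abs_div {ι : Type*} (s : Finset ι) (a : ι → ℝ) {w : ι → ℝ} {L : ℝ}
    (hL : 0 < L) (hw : ∀ i ∈ s, L ≤ w i) : ∑ i ∈ s, |a i| / w i ≤ (∑ i ∈ s, |a i|) / L := by
  rw [Finset.sum_div]
  exact Finset.sum_le_sum fun i hi => div_le_div_of_nonneg_left (abs_nonneg _) hL (hw i hi)

theorem anisotropic_randomized_smoothing_laplace_general
    {d : ℕ} (hd : 0 < d) {Y : Type*} [MeasurableSpace Y] [MeasurableSingletonClass Y]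
    (f : (Fin d → ℝ) → Y) (hf : Measurable f)
    (μ : Fin d → ℝ) (lam : Fin d → ℝ) (hlam : ∀ i, 0 < lam i)
    (noise : Measure (Fin d → ℝ))
    (hnoise : noise = Measure.pi fun i : Fin d => laplaceReal (μ i) (lam i))
    (x : Fin d → ℝ) (cA : Y) (pA pB : ℝ)
    (hA : (noise {e | f (x + e) = cA}).toReal ≥ pA)
    (hAB : pA ≥ pB)
    (hB : ∀ c : Y, c ≠ cA → pB ≥ (noise {e | f (x + e) = c}).toReal)
    (δ : Fin d → ℝ)
    (hδ : (∑ i, |δ i|) <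
      max ((1 / 2) * (Finset.univ.inf' ⟨⟨0, hd⟩, Finset.mem_univ _⟩ lam) * Real.log (pA / pB))
        (-(Finset.univ.inf' ⟨⟨0, hd⟩, Finset.mem_univ _⟩ lam) * Real.log (1 - pA + pB))) :
    ∀ c : Y, c ≠ cA →
      (noise {e | f (x + δ + e) = cA}).toReal >
        (noise {e | f (x + δ + e) = c}).toReal := by
  intro c hc
  subst hnoise
  have := fun i => isProbabilityMeasure_laplaceReal (μ i) (hlam i)
  have := Measure.isProbabilityMeasure_map (μ := Measure.pi fun i => laplaceReal (μ i) (lam i))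
    (measurable_const_add δ).aemeasurable
  have hmeas (b : Y) : MeasurableSet {e | f (x + e) = b} :=
    hf.comp (measurable_const_add x) (measurableSet_singleton b)
  have hshift (b : Y) : {e | f (x + δ + e) = b} = (δ + ·) ⁻¹' {e | f (x + e) = b} := by
    ext e
    simp [add_assoc]
  rw [gt_iff_lt, ← measureReal_def, ← measureReal_def, hshift, hshift,
    ← map_measureReal_apply (measurable_const_add δ) (hmeas _),
    ← map_measureReal_apply (measurable_const_add δ) (hmeas _)]
  have hL : 0 < Finset.univ.inf' ⟨⟨0, hd⟩, Finset.mem_univ _⟩ lam :=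
    (Finset.lt_inf'_iff _).2 fun i _ => hlam i
  refine measureReal_lt_of_le_exp_smul (map_add_pi_laplaceReal_le μ lam hlam δ)
    (pi_laplaceReal_le_map_add μ lam hlam δ) (hmeas cA) hA (hB c hc)
    (exp_two_mul_mul_lt_or_exp_mul_lt_one
      (Finset.sum_nonneg fun i _ => div_nonneg (abs_nonneg _) (hlam i).le)
      (measureReal_nonneg.trans (hB c hc)) hAB hL
      (sum_abs_div_le_sum_abs_div _ _ hL fun i _ => Finset.inf'_le _ (Finset.mem_univ i)) hδ)

/-- Randomized smoothing with anisotropic Laplace noise. -/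
theorem anisotropic_randomized_smoothing_laplace
    {d : ℕ} (hd : 0 < d) {Y : Type*} [Fintype Y] [MeasurableSpace Y] [MeasurableSingletonClass Y]
    (f : (Fin d → ℝ) → Y) (hf : Measurable f)
    (μ : Fin d → ℝ) (lam : Fin d → ℝ) (hlam : ∀ i, 0 < lam i)
    (noise : Measure (Fin d → ℝ))
    (hnoise : noise = Measure.pi fun i : Fin d => laplaceReal (μ i) (lam i))
    (x : Fin d → ℝ) (cA : Y) (pA pB : ℝ)
    (hpA : pA ∈ Set.Icc (0 : ℝ) 1) (hpB : pB ∈ Set.Icc (0 : ℝ) 1)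
    (hA : (noise {e | f (x + e) = cA}).toReal ≥ pA)
    (hAB : pA ≥ pB)
    (hB : ∀ c : Y, c ≠ cA → pB ≥ (noise {e | f (x + e) = c}).toReal)
    (δ : Fin d → ℝ)
    (hδ : (∑ i, |δ i|) <
      max ((1 / 2) * (Finset.univ.inf' ⟨⟨0, hd⟩, Finset.mem_univ _⟩ lam) * Real.log (pA / pB))
        (-(Finset.univ.inf' ⟨⟨0, hd⟩, Finset.mem_univ _⟩ lam) * Real.log (1 - pA + pB))) :
    ∀ c : Y, c ≠ cA →
      (noise {e | f (x + δ + e) = cA}).toReal >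
        (noise {e | f (x + δ + e) = c}).toReal :=
  anisotropic_randomized_smoothing_laplace_general hd f hf μ lam hlam noise hnoise x cA pA pB hA hAB
    hB δ hδ
end

section
/- (Neyman–Pearson for anisotropic Gaussians, part 1) Let x, μ, δ ∈ ℝ^d and σ₁,…,σ_d > 0. Let X be a random vector whose i-th coordinate is an independent Gaussian N(x_i + μ_i, σ_i²) and Y a random vector whose i-th coordinate is an independent Gaussian N(x_i + μ_i + δ_i, σ_i²). Let h : ℝ^d → {0,1} be any deterministic measurable function. If S = { z ∈ ℝ^d : Σ_{i=1}^d (δ_i/σ_i²)·z_i ≤ β } for some β ∈ ℝ and P(h(X)=1) ≥ P(X ∈ S), then P(h(Y)=1) ≥ P(Y ∈ S). -/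
/-!
The likelihood ratio `dμY/dμX` of the two product Gaussians is `z ↦ exp (∑ δᵢ zᵢ / σᵢ² - c)`,
an increasing function of the statistic that defines `S`; so the density is at most
`k = exp (β - c)` on `S` and at least `k` off `S`. Since `μX (S \ T) ≤ μX (T \ S)` for
`T = {h = true}`, the `μY`-mass of `S \ T` is at most `k` times its `μX`-mass, which is at most
the `μY`-mass of `T \ S`.
-/

open MeasureTheory ProbabilityTheory
open scoped ENNReal NNReal

namespace MeasureTheory

theorem withDensity_apply_le_of_threshold {α : Type*} [MeasurableSpace α] {μ : Measure α}
    [IsFiniteMeasure μ] {g : α → ℝ≥0∞} {k : ℝ≥0∞} {S T : Set α}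
    (hS : MeasurableSet S) (hT : MeasurableSet T)
    (hg_le : ∀ z ∈ S, g z ≤ k) (hg_ge : ∀ z ∉ S, k ≤ g z) (hST : μ S ≤ μ T) :
    μ.withDensity g S ≤ μ.withDensity g T := by
  have hdiff : μ (S \ T) ≤ μ (T \ S) := by
    rw [← measure_inter_add_sdiff S hT, ← measure_inter_add_sdiff T hS, Set.inter_comm] at hST
    exact (ENNReal.add_le_add_iff_left (measure_ne_top μ _)).mp hST
  calc μ.withDensity g S = μ.withDensity g (S ∩ T) + ∫⁻ z in S \ T, g z ∂μ := by
        rw [← withDensity_apply _ (hS.diff hT), measure_inter_add_sdiff S hT]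
    _ ≤ μ.withDensity g (S ∩ T) + ∫⁻ _ in S \ T, k ∂μ :=
        add_le_add le_rfl (setLIntegral_mono' (hS.diff hT) fun z hz => hg_le z hz.1)
    _ = μ.withDensity g (S ∩ T) + k * μ (S \ T) := by rw [setLIntegral_const]
    _ ≤ μ.withDensity g (S ∩ T) + k * μ (T \ S) := by gcongr
    _ = μ.withDensity g (S ∩ T) + ∫⁻ _ in T \ S, k ∂μ := by rw [setLIntegral_const]
    _ ≤ μ.withDensity g (S ∩ T) + ∫⁻ z in T \ S, g z ∂μ :=
        add_le_add le_rfl (setLIntegral_mono' (hT.diff hS) fun z hz => hg_ge z hz.2)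
    _ = μ.withDensity g T := by
        rw [← withDensity_apply _ (hT.diff hS), Set.inter_comm, measure_inter_add_sdiff T hS]

section Pi

variable {ι : Type*} [Fintype ι] {X : ι → Type*} [∀ i, MeasurableSpace (X i)]

theorem lintegral_fintype_prod_eq_prod_s6 (μ : ∀ i, Measure (X i)) [∀ i, IsProbabilityMeasure (μ i)]
    {f : ∀ i, X i → ℝ≥0∞} (hf : ∀ i, Measurable (f i)) :
    ∫⁻ z, ∏ i, f i (z i) ∂Measure.pi μ = ∏ i, ∫⁻ t, f i t ∂μ i := by
  rw [lintegral_prod_eq_prod_lintegral_of_indepFun _ _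
    (iIndepFun_pi fun i => (hf i).aemeasurable) fun i => (hf i).comp (measurable_pi_apply i)]
  exact Finset.prod_congr rfl fun i _ => (measurePreserving_eval μ i).lintegral_comp (hf i)

theorem Measure.pi_eq_withDensity_prod (μ ν : ∀ i, Measure (X i))
    [∀ i, IsProbabilityMeasure (μ i)] [∀ i, SigmaFinite (ν i)]
    {f : ∀ i, X i → ℝ≥0∞} (hf : ∀ i, Measurable (f i)) (hν : ∀ i, ν i = (μ i).withDensity (f i)) :
    Measure.pi ν = (Measure.pi μ).withDensity fun z => ∏ i, f i (z i) := by
  classical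
  refine Measure.pi_eq fun s hs => ?_
  have hindicator : (Set.univ.pi s).indicator (fun z => ∏ i, f i (z i))
      = fun z => ∏ i, (s i).indicator (f i) (z i) := by
    ext z
    simp only [Set.indicator_apply, Set.mem_univ_pi, Finset.prod_ite_zero, Finset.mem_univ,
      true_implies]
  rw [withDensity_apply _ (MeasurableSet.univ_pi hs),
    ← lintegral_indicator (MeasurableSet.univ_pi hs), hindicator,
    lintegral_fintype_prod_eq_prod_s6 μ fun i => (hf i).indicator (hs i)]
  exact Finset.prod_congr rfl fun i _ => by
    rw [lintegral_indicator (hs i), ← withDensity_apply _ (hs i), hν i]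

end Pi

end MeasureTheory

namespace ProbabilityTheory

theorem gaussianReal_add_eq_withDensity (m δ : ℝ) {v : ℝ≥0} (hv : v ≠ 0) :
    gaussianReal (m + δ) v = (gaussianReal m v).withDensity
      fun t => ENNReal.ofReal (Real.exp (δ / v * t - δ * (m + δ / 2) / v)) := by
  rw [gaussianReal_of_var_ne_zero _ hv, gaussianReal_of_var_ne_zero _ hv,
    ← withDensity_mul _ (measurable_gaussianPDF _ _) (by fun_prop)]
  congr with t
  simp only [gaussianPDF, Pi.mul_apply]
  rw [← ENNReal.ofReal_mul (gaussianPDFReal_nonneg _ _ _)]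
  congr 1
  simp only [gaussianPDFReal]
  rw [mul_assoc _ (Real.exp _), ← Real.exp_add]
  congr 2
  have : (v : ℝ) ≠ 0 := by exact_mod_cast hv
  field_simp
  ring

end ProbabilityTheory

/-- Neyman–Pearson for anisotropic Gaussians, part 1. -/
theorem neyman_pearson_gaussian_one
    {d : ℕ} (x μ δ : Fin d → ℝ) (σ : Fin d → ℝ) (hσ : ∀ i, 0 < σ i)
    (μX μY : Measure (Fin d → ℝ))
    (hμX : μX = Measure.pi fun i : Fin d => gaussianReal (x i + μ i) ((σ i ^ 2).toNNReal))
    (hμY : μY = Measure.pi fun i : Fin d => gaussianReal (x i + μ i + δ i) ((σ i ^ 2).toNNReal))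
    (h : (Fin d → ℝ) → Bool) (hh : Measurable h)
    (β : ℝ) (S : Set (Fin d → ℝ))
    (hS : S = {z | ∑ i, δ i / σ i ^ 2 * z i ≤ β})
    (hcond : μX {z | h z = true} ≥ μX S) :
    μY {z | h z = true} ≥ μY S := by
  set L : (Fin d → ℝ) → ℝ := fun z => ∑ i, δ i / σ i ^ 2 * z i
  set c : ℝ := ∑ i, δ i * (x i + μ i + δ i / 2) / σ i ^ 2
  have hvar (i : Fin d) : ((σ i ^ 2).toNNReal : ℝ) = σ i ^ 2 := Real.coe_toNNReal _ (sq_nonneg _)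
  have hlikelihood : μY = μX.withDensity fun z => ENNReal.ofReal (Real.exp (L z - c)) := by
    rw [hμX, hμY, Measure.pi_eq_withDensity_prod _ _ (fun i => by fun_prop) fun i =>
      gaussianReal_add_eq_withDensity _ _ (Real.toNNReal_pos.2 (pow_pos (hσ i) 2)).ne']
    congr with z
    rw [← ENNReal.ofReal_prod_of_nonneg fun i _ => (Real.exp_pos _).le, ← Real.exp_sum,
      Finset.sum_sub_distrib]
    simp only [hvar, L, c]
  have : IsProbabilityMeasure μX := hμX ▸ inferInstance
  subst hS
  rw [hlikelihood]
  refine withDensity_apply_le_of_threshold (k := ENNReal.ofReal (Real.exp (β - c)))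
    (measurableSet_le (by fun_prop) measurable_const) (hh (measurableSet_singleton true))
    (fun z hz => ?_) (fun z hz => ?_) hcond
  · exact ENNReal.ofReal_le_ofReal (Real.exp_le_exp.2 (by linarith [show L z ≤ β from hz]))
  · exact ENNReal.ofReal_le_ofReal
      (Real.exp_le_exp.2 (by linarith [not_le.1 (show ¬L z ≤ β from hz)]))
end

section
/- (Neyman–Pearson for anisotropic Laplace, part 2) Let x, μ, δ ∈ ℝ^d and λ₁,…,λ_d > 0. Let X be a random vector whose i-th coordinate is an independent Laplace random variable with location x_i + μ_i and scale λ_i, and Y a random vector whose i-th coordinate is an independent Laplace random variable with location x_i + μ_i + δ_i and scale λ_i. Let h : ℝ^d → {0,1} be any deterministic measurable function. If S = { z ∈ ℝ^d : Σ_{i=1}^d (1/λ_i)·(|z_i − (x_i+μ_i) − δ_i| − |z_i − (x_i+μ_i)|) ≤ β } for some β ∈ ℝ and P(h(X)=1) ≤ P(X ∈ S), then P(h(Y)=1) ≤ P(Y ∈ S). -/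
/-! The law of `Y` has density `exp (-f)` with respect to the law of `X`, where `S = {f ≤ β}`:
the densities factor over the coordinates, and shifting the location of a coordinate by `δ`
multiplies its density by `exp (-(|z - m - δ| - |z - m|) / λ)`. This likelihood ratio is at least
`exp (-β)` on `S` and at most `exp (-β)` off `S`. For `A = {h = 1}`, the hypothesis says
`P(X ∈ A \ S) ≤ P(X ∈ S \ A)`, and reweighting by the likelihood ratio preserves this. -/

open MeasureTheory ProbabilityTheory

open Real Set
open scoped ENNReal

lemma integral_exp_neg_abs_div {l : ℝ} (hl : 0 < l) : ∫ z, exp (-|z| / l) = 2 * l := by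
  have h := integral_exp_mul_Ioi (neg_neg_of_pos (inv_pos.mpr hl)) 0
  simp only [mul_zero, exp_zero, neg_div_neg_eq, one_div, inv_inv] at h
  calc ∫ z, exp (-|z| / l) = 2 * ∫ z in Ioi 0, exp (-l⁻¹ * z) := by
        rw [← integral_comp_abs (f := fun z => exp (-l⁻¹ * z))]
        congr 1 with z
        ring_nf
    _ = 2 * l := by rw [h]

lemma laplaceReal_add_eq_withDensity (m δ : ℝ) {l : ℝ} (hl : 0 < l) :
    laplaceReal (m + δ) l =
      (laplaceReal m l).withDensity
        fun z => ENNReal.ofReal (exp (-(1 / l * (|z - m - δ| - |z - m|)))) := by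
  rw [laplaceReal, laplaceReal, ← withDensity_mul _ (by fun_prop) (by fun_prop)]
  congr 1
  funext z
  rw [Pi.mul_apply, ← ENNReal.ofReal_mul (by positivity), mul_assoc, ← exp_add, sub_sub z m δ]
  congr 3
  field_simp
  ring

section Pi

variable {ι : Type*} [Fintype ι] {α : ι → Type*} [∀ i, MeasurableSpace (α i)]
  (ν : (i : ι) → Measure (α i)) [∀ i, IsProbabilityMeasure (ν i)]
  {g : (i : ι) → α i → ℝ≥0∞}

lemma lintegral_pi_prod_eq_prod (hg : ∀ i, Measurable (g i)) :
    ∫⁻ z, ∏ i, g i (z i) ∂Measure.pi ν = ∏ i, ∫⁻ t, g i t ∂ν i := by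
  rw [lintegral_prod_eq_prod_lintegral_of_indepFun _ _
    (iIndepFun_pi fun i => (hg i).aemeasurable) fun i => (hg i).comp (measurable_pi_apply i)]
  exact Finset.prod_congr rfl fun i _ => (measurePreserving_eval ν i).lintegral_comp (hg i)

lemma pi_withDensity_eq (hg : ∀ i, Measurable (g i))
    [∀ i, SigmaFinite ((ν i).withDensity (g i))] :
    Measure.pi (fun i => (ν i).withDensity (g i)) =
      (Measure.pi ν).withDensity fun z => ∏ i, g i (z i) := by
  refine Measure.pi_eq fun s hs => ?_
  have hind : (univ.pi s).indicator (fun z => ∏ i, g i (z i)) =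
      fun z => ∏ i, (s i).indicator (g i) (z i) := by
    funext z
    by_cases hz : ∀ i, z i ∈ s i
    · simp [hz]
    · obtain ⟨i, hi⟩ := not_forall.mp hz
      rw [indicator_of_notMem (by simpa using hz),
        Finset.prod_eq_zero (Finset.mem_univ i) (indicator_of_notMem hi (g i))]
  rw [withDensity_apply _ (MeasurableSet.univ_pi hs),
    ← lintegral_indicator (MeasurableSet.univ_pi hs), hind,
    lintegral_pi_prod_eq_prod ν fun i => (hg i).indicator (hs i)]
  simp only [lintegral_indicator (hs _), withDensity_apply _ (hs _)]

end Pi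

lemma pi_laplaceReal_add_eq_withDensity {ι : Type*} [Fintype ι] (m δ lam : ι → ℝ)
    (hlam : ∀ i, 0 < lam i) :
    Measure.pi (fun i => laplaceReal (m i + δ i) (lam i)) =
      (Measure.pi fun i => laplaceReal (m i) (lam i)).withDensity
        fun z => ENNReal.ofReal (exp (-∑ i, 1 / lam i * (|z i - m i - δ i| - |z i - m i|))) := by
  have := fun i => isProbabilityMeasure_laplaceReal (m i) (hlam i)
  have hshift := fun i => laplaceReal_add_eq_withDensity (m i) (δ i) (hlam i)
  have : ∀ i, SigmaFinite ((laplaceReal (m i) (lam i)).withDensity fun t =>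
      ENNReal.ofReal (exp (-(1 / lam i * (|t - m i - δ i| - |t - m i|))))) := fun i => by
    rw [← hshift i]
    have := isProbabilityMeasure_laplaceReal (m i + δ i) (hlam i)
    infer_instance
  simp_rw [hshift]
  rw [pi_withDensity_eq _ fun i => by fun_prop]
  congr 1 with z
  rw [← ENNReal.ofReal_prod_of_nonneg fun i _ => (exp_pos _).le, ← exp_sum,
    Finset.sum_neg_distrib]

section Threshold

variable {α : Type*} [MeasurableSpace α] {μ : Measure α} {A S : Set α}

lemma measure_sdiff_le_measure_sdiff_of_measure_le [IsFiniteMeasure μ] (hA : MeasurableSet A)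
    (hS : MeasurableSet S) (hAS : μ A ≤ μ S) : μ (A \ S) ≤ μ (S \ A) := by
  rw [← measure_inter_add_sdiff A hS, ← measure_inter_add_sdiff S hA, inter_comm] at hAS
  exact (ENNReal.add_le_add_iff_left (measure_ne_top μ _)).mp hAS

lemma measure_le_measure_of_measure_sdiff_le (hA : MeasurableSet A) (hS : MeasurableSet S)
    (hAS : μ (A \ S) ≤ μ (S \ A)) : μ A ≤ μ S := by
  rw [← measure_inter_add_sdiff A hS, ← measure_inter_add_sdiff S hA, inter_comm]
  gcongr

theorem withDensity_apply_le_of_measure_le_of_threshold [IsFiniteMeasure μ] {G : α → ℝ≥0∞}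
    {c : ℝ≥0∞} (hA : MeasurableSet A) (hS : MeasurableSet S)
    (hG_ge : ∀ z ∈ S, c ≤ G z) (hG_le : ∀ z ∉ S, G z ≤ c) (hAS : μ A ≤ μ S) :
    μ.withDensity G A ≤ μ.withDensity G S := by
  have hμ := measure_sdiff_le_measure_sdiff_of_measure_le hA hS hAS
  refine measure_le_measure_of_measure_sdiff_le hA hS ?_
  rw [withDensity_apply _ (hA.diff hS), withDensity_apply _ (hS.diff hA)]
  calc ∫⁻ z in A \ S, G z ∂μ
      ≤ ∫⁻ _ in A \ S, c ∂μ := setLIntegral_mono measurable_const fun z hz => hG_le z hz.2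
    _ = c * μ (A \ S) := setLIntegral_const _ _
    _ ≤ c * μ (S \ A) := by gcongr
    _ = ∫⁻ _ in S \ A, c ∂μ := (setLIntegral_const _ _).symm
    _ ≤ ∫⁻ z in S \ A, G z ∂μ := setLIntegral_mono' (hS.diff hA) fun z hz => hG_ge z hz.1

end Threshold

/-- Neyman–Pearson for anisotropic Laplace noise, part 2. -/
theorem neyman_pearson_laplace_two
    {d : ℕ} (x μ δ : Fin d → ℝ) (lam : Fin d → ℝ) (hlam : ∀ i, 0 < lam i)
    (μX μY : Measure (Fin d → ℝ))
    (hμX : μX = Measure.pi fun i : Fin d => laplaceReal (x i + μ i) (lam i))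
    (hμY : μY = Measure.pi fun i : Fin d => laplaceReal (x i + μ i + δ i) (lam i))
    (h : (Fin d → ℝ) → Bool) (hh : Measurable h)
    (β : ℝ) (S : Set (Fin d → ℝ))
    (hS : S = {z | ∑ i, (1 / lam i) * (|z i - (x i + μ i) - δ i| - |z i - (x i + μ i)|) ≤ β})
    (hcond : μX {z | h z = true} ≤ μX S) :
    μY {z | h z = true} ≤ μY S := by
  subst hμX hμY hS
  have := fun i => isProbabilityMeasure_laplaceReal (x i + μ i) (hlam i)
  rw [pi_laplaceReal_add_eq_withDensity (fun i => x i + μ i) δ lam hlam]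
  refine withDensity_apply_le_of_measure_le_of_threshold (c := ENNReal.ofReal (exp (-β)))
    (hh (measurableSet_singleton true)) (measurableSet_le (by fun_prop) measurable_const)
    (fun z hz => ?_) (fun z hz => ?_) hcond
  · exact ENNReal.ofReal_le_ofReal (exp_le_exp.mpr (neg_le_neg hz))
  · exact ENNReal.ofReal_le_ofReal (exp_le_exp.mpr (neg_le_neg (not_le.mp hz).le))
end

section
/- Let x, μ, δ ∈ ℝ^d with δ ≠ 0, σ₁,…,σ_d > 0, and p ∈ (0,1). Let Y be a random vector whose i-th coordinate is an independent Gaussian N(x_i + μ_i + δ_i, σ_i²). Then P( Σ_{i=1}^d (δ_i/σ_i²)·(Y_i − μ_i − x_i) ≤ √(Σ_{i=1}^d δ_i²/σ_i²)·Φ⁻¹(p) ) = Φ( Φ⁻¹(p) − √(Σ_{i=1}^d δ_i²/σ_i²) ). -/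
open MeasureTheory ProbabilityTheory

/-- The cumulative distribution function of the standard normal distribution `N(0,1)`. -/
noncomputable def Phi : ℝ → ℝ :=
  fun x => ((gaussianReal 0 1) (Set.Iic x)).toReal

/-- The inverse of the standard normal CDF. -/
noncomputable def PhiInv : ℝ → ℝ := Function.invFun Phi

/-!
Under the product Gaussian law, the statistic `∑ δᵢ/σᵢ² (Yᵢ - μᵢ - xᵢ)` is a linear functional
of independent Gaussians, hence itself Gaussian, here with mean and variance both equal to
`s² = ∑ δᵢ²/σᵢ²` (read off the characteristic function). Standardizing, the event becomes
`N(0,1) ≤ (s Φ⁻¹(p) - s²)/s = Φ⁻¹(p) - s`.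
-/

open scoped NNReal

open Complex in
lemma map_pi_gaussianReal_sum_mul {ι : Type*} [Fintype ι] (c m : ι → ℝ) (v : ι → ℝ≥0) :
    (Measure.pi fun i => gaussianReal (m i) (v i)).map (fun z => ∑ i, c i * z i)
      = gaussianReal (∑ i, c i * m i) (∑ i, (c i ^ 2).toNNReal * v i) := by
  refine Measure.ext_of_charFun (funext fun t => ?_)
  have hexp_sum (z : ι → ℝ) :
      cexp (t * (∑ i, c i * z i : ℝ) * I) = ∏ i, cexp ((t * c i : ℝ) * z i * I) := by
    rw [← Complex.exp_sum]
    push_cast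
    simp only [Finset.mul_sum, Finset.sum_mul, mul_assoc]
  rw [charFun_apply_real, integral_map (by fun_prop : Measurable _).aemeasurable (by fun_prop)]
  simp_rw [hexp_sum]
  rw [integral_fintype_prod_eq_prod (fun i (x : ℝ) => cexp ((t * c i : ℝ) * x * I))]
  simp_rw [← charFun_apply_real, charFun_gaussianReal, ← Complex.exp_sum]
  congr 1
  push_cast [Real.coe_toNNReal _ (sq_nonneg _)]
  simp only [Finset.sum_sub_distrib, Finset.mul_sum, Finset.sum_mul, Finset.sum_div]
  congr 1 <;> refine Finset.sum_congr rfl fun i _ => by ring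

lemma gaussianReal_map_standardize (m : ℝ) {v : ℝ≥0} (hv : v ≠ 0) :
    (gaussianReal m v).map (fun x => (x - m) / √v) = gaussianReal 0 1 := by
  have hcomp : (fun x => (x - m) / √v) = (· / √v) ∘ (· - m) := rfl
  rw [hcomp, ← Measure.map_map (by fun_prop) (by fun_prop), gaussianReal_map_sub_const,
    gaussianReal_map_div_const, sub_self, zero_div]
  congr 1
  ext
  simp [Real.sq_sqrt v.coe_nonneg, hv]

lemma gaussianReal_Iic_toReal_eq_Phi (m : ℝ) {v : ℝ≥0} (hv : v ≠ 0) (t : ℝ) :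
    (gaussianReal m v (Set.Iic t)).toReal = Phi ((t - m) / √v) := by
  have hsqrt : 0 < √(v : ℝ) := Real.sqrt_pos.mpr (by positivity)
  have hpre : (fun x => (x - m) / √v) ⁻¹' Set.Iic ((t - m) / √v) = Set.Iic t := by
    ext x; simp [div_le_div_iff_of_pos_right hsqrt]
  rw [Phi, ← gaussianReal_map_standardize m hv, Measure.map_apply (by fun_prop) measurableSet_Iic,
    hpre]

lemma toReal_pi_gaussianReal_setOf_sum_mul_sub_le {ι : Type*} [Fintype ι] (c a m : ι → ℝ)
    (v : ι → ℝ≥0) (hv : 0 < ∑ i, c i ^ 2 * v i) (t : ℝ) :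
    (Measure.pi (fun i => gaussianReal (m i) (v i)) {z | ∑ i, c i * (z i - a i) ≤ t}).toReal
      = Phi ((t - ∑ i, c i * (m i - a i)) / √(∑ i, c i ^ 2 * v i)) := by
  have hset : {z : ι → ℝ | ∑ i, c i * (z i - a i) ≤ t}
      = (fun z => ∑ i, c i * z i) ⁻¹' Set.Iic (t + ∑ i, c i * a i) := by
    ext z
    simp [mul_sub, Finset.sum_sub_distrib]
  have hvar : ((∑ i, (c i ^ 2).toNNReal * v i : ℝ≥0) : ℝ) = ∑ i, c i ^ 2 * v i := by
    push_cast [Real.coe_toNNReal _ (sq_nonneg _)]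
    rfl
  rw [hset, ← Measure.map_apply (by fun_prop) measurableSet_Iic, map_pi_gaussianReal_sum_mul,
    gaussianReal_Iic_toReal_eq_Phi _ (by rw [← NNReal.coe_ne_zero, hvar]; exact hv.ne'), hvar]
  congr 2
  simp only [mul_sub, Finset.sum_sub_distrib]
  ring

theorem gaussian_halfspace_prob_Y_le_general
    {d : ℕ} (x μ δ σ : Fin d → ℝ) (hσ : ∀ i, 0 < σ i) (hδ : δ ≠ 0)
    (p : ℝ)
    (μY : Measure (Fin d → ℝ))
    (hμY : μY = Measure.pi fun i : Fin d => gaussianReal (x i + μ i + δ i) ((σ i ^ 2).toNNReal)) :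
    (μY {z | ∑ i, δ i / σ i ^ 2 * (z i - μ i - x i) ≤
        Real.sqrt (∑ i, δ i ^ 2 / σ i ^ 2) * PhiInv p}).toReal =
      Phi (PhiInv p - Real.sqrt (∑ i, δ i ^ 2 / σ i ^ 2)) := by
  subst hμY
  set s2 := ∑ i, δ i ^ 2 / σ i ^ 2
  have hmean : ∑ i, δ i / σ i ^ 2 * (x i + μ i + δ i - (μ i + x i)) = s2 :=
    Finset.sum_congr rfl fun i _ => by field_simp [(hσ i).ne']; ring
  have hvar : ∑ i, (δ i / σ i ^ 2) ^ 2 * ((σ i ^ 2).toNNReal : ℝ) = s2 :=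
    Finset.sum_congr rfl fun i _ => by rw [Real.coe_toNNReal _ (sq_nonneg _)]; field_simp [(hσ i).ne']
  have hs2 : 0 < s2 := by
    obtain ⟨j, hj⟩ : ∃ j, δ j ≠ 0 := Function.ne_iff.mp hδ
    exact Finset.sum_pos' (fun i _ => by positivity)
      ⟨j, Finset.mem_univ _, by have := hσ j; positivity⟩
  simp_rw [sub_sub]
  rw [toReal_pi_gaussianReal_setOf_sum_mul_sub_le _ _ _ _ (hvar ▸ hs2), hmean, hvar]
  congr 1
  rw [sub_div, mul_div_cancel_left₀ _ (Real.sqrt_pos.mpr hs2).ne', Real.div_sqrt]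

theorem gaussian_halfspace_prob_Y_le
    {d : ℕ} (x μ δ σ : Fin d → ℝ) (hσ : ∀ i, 0 < σ i) (hδ : δ ≠ 0)
    (p : ℝ) (hp : p ∈ Set.Ioo (0 : ℝ) 1)
    (μY : Measure (Fin d → ℝ))
    (hμY : μY = Measure.pi fun i : Fin d => gaussianReal (x i + μ i + δ i) ((σ i ^ 2).toNNReal)) :
    (μY {z | ∑ i, δ i / σ i ^ 2 * (z i - μ i - x i) ≤
        Real.sqrt (∑ i, δ i ^ 2 / σ i ^ 2) * PhiInv p}).toReal =
      Phi (PhiInv p - Real.sqrt (∑ i, δ i ^ 2 / σ i ^ 2)) :=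
  gaussian_halfspace_prob_Y_le_general x μ δ σ hσ hδ p μY hμY
end

section
/- Let x, μ, δ ∈ ℝ^d with δ ≠ 0, σ₁,…,σ_d > 0, and p ∈ (0,1). Let Y be a random vector whose i-th coordinate is an independent Gaussian N(x_i + μ_i + δ_i, σ_i²). Then P( Σ_{i=1}^d (δ_i/σ_i²)·(Y_i − μ_i − x_i) ≥ √(Σ_{i=1}^d δ_i²/σ_i²)·Φ⁻¹(1 − p) ) = Φ( Φ⁻¹(p) + √(Σ_{i=1}^d δ_i²/σ_i²) ). -/
open MeasureTheory ProbabilityTheory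

/-!
The statistic `T(Y) = ∑ δᵢ/σᵢ² (Yᵢ - μᵢ - xᵢ)` is a linear combination of independent Gaussians,
so comparing characteristic functions shows that it is `N(s, s)` with `s = ∑ δᵢ²/σᵢ²`. Hence
`P(T ≥ √s Φ⁻¹(1 - p)) = Φ((s - √s Φ⁻¹(1 - p)) / √s)`, and `Φ⁻¹(1 - p) = -Φ⁻¹(p)` finishes the
computation. Since `PhiInv` is `Function.invFun Phi`, this symmetry needs `Φ` to be injective and
to hit every `p ∈ (0, 1)`, i.e. the standard normal CDF must be continuous and strictly increasing.
-/

open Real Set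
open scoped NNReal

namespace ProbabilityTheory

section CDF

variable {μ : Measure ℝ} [IsProbabilityMeasure μ]

lemma continuous_cdf [NullSingletonClass μ] : Continuous (cdf μ) := by
  refine continuous_iff_continuousAt.2 fun x => ?_
  rw [(monotone_cdf μ).continuousAt_iff_leftLim_eq_rightLim, (cdf μ).rightLim_eq]
  have h := (cdf μ).measure_singleton x
  rw [measure_cdf, measure_singleton, eq_comm, ENNReal.ofReal_eq_zero, sub_nonpos] at h
  exact le_antisymm ((monotone_cdf μ).leftLim_le le_rfl) h

lemma strictMono_cdf (h : volume ≪ μ) : StrictMono (cdf μ) := by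
  intro a b hab
  have hpos : 0 < μ.real (Ioc a b) := by
    refine ENNReal.toReal_pos (fun h0 => ?_) (measure_ne_top _ _)
    exact hab.not_ge (by simpa using h h0)
  rw [cdf_eq_real, cdf_eq_real, ← Iic_union_Ioc_eq_Iic hab.le,
    measureReal_union (Iic_disjoint_Ioc le_rfl) measurableSet_Ioc]
  linarith

lemma cdf_neg_of_map_neg_eq [NullSingletonClass μ] (hsymm : μ.map (fun u => -u) = μ) (y : ℝ) :
    cdf μ (-y) = 1 - cdf μ y := by
  rw [cdf_eq_real, cdf_eq_real]
  conv_lhs => rw [← hsymm]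
  rw [map_measureReal_apply measurable_neg measurableSet_Iic,
    show Neg.neg ⁻¹' Iic (-y) = (Iio y)ᶜ by ext; simp,
    probReal_compl_eq_one_sub measurableSet_Iio, measureReal_congr Iio_ae_eq_Iic]

end CDF

lemma map_sum_pi_gaussianReal {ι : Type*} [Fintype ι] (m : ι → ℝ) (v : ι → ℝ≥0) :
    (Measure.pi fun i => gaussianReal (m i) (v i)).map (fun z => ∑ i, z i) =
      gaussianReal (∑ i, m i) (∑ i, v i) := by
  refine Measure.ext_of_charFun ?_
  ext t
  simp only [charFun_map_sum_pi_eq_prod, Finset.prod_apply, charFun_gaussianReal,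
    ← Complex.exp_sum]
  push_cast
  congr 1
  simp only [Finset.sum_sub_distrib, Finset.mul_sum, Finset.sum_mul, Finset.sum_div]

lemma map_sum_mul_sub_pi_gaussianReal {ι : Type*} [Fintype ι] (c a m : ι → ℝ) (v : ι → ℝ≥0) :
    (Measure.pi fun i => gaussianReal (m i) (v i)).map (fun z => ∑ i, c i * (z i - a i)) =
      gaussianReal (∑ i, c i * (m i - a i)) (∑ i, .mk (c i ^ 2) (sq_nonneg _) * v i) := by
  have hcoord (i : ι) : (gaussianReal (m i) (v i)).map (fun u => c i * (u - a i)) =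
      gaussianReal (c i * (m i - a i)) (.mk (c i ^ 2) (sq_nonneg _) * v i) := by
    rw [show (fun u => c i * (u - a i)) = (c i * ·) ∘ (· - a i) from rfl,
      ← Measure.map_map (by fun_prop) (by fun_prop), gaussianReal_map_sub_const,
      gaussianReal_map_const_mul]
  rw [show (fun z : ι → ℝ => ∑ i, c i * (z i - a i)) =
      (fun z => ∑ i, z i) ∘ fun z i => c i * (z i - a i) from rfl,
    ← Measure.map_map (by fun_prop) (by fun_prop),
    Measure.pi_map_pi (f := fun i u => c i * (u - a i)) (fun i => by fun_prop)]
  simp_rw [hcoord]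
  exact map_sum_pi_gaussianReal _ _

end ProbabilityTheory

lemma Phi_eq_cdf : Phi = cdf (gaussianReal 0 1) := by
  funext x
  rw [Phi, cdf_eq_real, measureReal_def]

lemma Phi_neg (y : ℝ) : Phi (-y) = 1 - Phi y := by
  have := nullSingletonClass_gaussianReal (μ := 0) one_ne_zero
  rw [Phi_eq_cdf]
  exact cdf_neg_of_map_neg_eq (by rw [gaussianReal_map_neg, neg_zero]) y

lemma Phi_PhiInv {p : ℝ} (hp : p ∈ Ioo 0 1) : Phi (PhiInv p) = p := by
  have := nullSingletonClass_gaussianReal (μ := 0) one_ne_zero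
  refine Function.invFun_eq (mem_range_of_exists_le_of_exists_ge ?_ ?_ ?_)
  all_goals rw [Phi_eq_cdf]
  · exact continuous_cdf
  · exact ((tendsto_cdf_atBot _).eventually (eventually_le_nhds hp.1)).exists
  · exact ((tendsto_cdf_atTop _).eventually (eventually_ge_nhds hp.2)).exists

lemma PhiInv_one_sub {p : ℝ} (hp : p ∈ Ioo 0 1) : PhiInv (1 - p) = -PhiInv p := by
  have hinj : Function.Injective Phi := by
    rw [Phi_eq_cdf]
    exact (strictMono_cdf (gaussianReal_absolutelyContinuous' 0 one_ne_zero)).injective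
  apply hinj
  rw [Phi_neg, Phi_PhiInv hp, Phi_PhiInv ⟨by linarith [hp.2], by linarith [hp.1]⟩]

lemma toReal_gaussianReal_Ici (m r : ℝ) {v : ℝ≥0} (hv : v ≠ 0) :
    (gaussianReal m v (Ici r)).toReal = Phi ((m - r) / √v) := by
  have hstd : ((gaussianReal m v).map (m - ·)).map (· / √v) = gaussianReal 0 1 := by
    rw [gaussianReal_map_const_sub, gaussianReal_map_div_const, sub_self, zero_div]
    congr 1
    ext
    simp [hv]
  have hpre : (fun u => (m - u) / √v) ⁻¹' Iic ((m - r) / √v) = Ici r := by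
    ext u
    simp only [mem_preimage, mem_Iic, mem_Ici,
      div_le_div_iff_of_pos_right (show 0 < √(v : ℝ) by positivity), sub_le_sub_iff_left]
  rw [Phi, ← hstd, Measure.map_map (by fun_prop) (by fun_prop),
    Measure.map_apply (by fun_prop) measurableSet_Iic]
  exact congrArg _ (congrArg _ hpre.symm)

theorem gaussian_halfspace_prob_Y_ge
    {d : ℕ} (x μ δ σ : Fin d → ℝ) (hσ : ∀ i, 0 < σ i) (hδ : δ ≠ 0)
    (p : ℝ) (hp : p ∈ Set.Ioo (0 : ℝ) 1)
    (μY : Measure (Fin d → ℝ))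
    (hμY : μY = Measure.pi fun i : Fin d => gaussianReal (x i + μ i + δ i) ((σ i ^ 2).toNNReal)) :
    (μY {z | ∑ i, δ i / σ i ^ 2 * (z i - μ i - x i) ≥
        Real.sqrt (∑ i, δ i ^ 2 / σ i ^ 2) * PhiInv (1 - p)}).toReal =
      Phi (PhiInv p + Real.sqrt (∑ i, δ i ^ 2 / σ i ^ 2)) := by
  set s := ∑ i, δ i ^ 2 / σ i ^ 2
  have hs : 0 < s := by
    obtain ⟨j, hj⟩ := Function.ne_iff.mp hδ
    rw [Pi.zero_apply] at hj
    have := (hσ j).ne'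
    exact Finset.sum_pos' (fun i _ => by positivity) ⟨j, Finset.mem_univ j, by positivity⟩
  set T : (Fin d → ℝ) → ℝ := fun z => ∑ i, δ i / σ i ^ 2 * (z i - (μ i + x i))
  have hlaw : μY.map T = gaussianReal s s.toNNReal := by
    rw [hμY, map_sum_mul_sub_pi_gaussianReal]
    congr 1
    · refine Finset.sum_congr rfl fun i _ => ?_
      have := (hσ i).ne'
      field_simp
      ring
    · rw [← NNReal.coe_inj, NNReal.coe_sum, Real.coe_toNNReal _ hs.le]
      refine Finset.sum_congr rfl fun i _ => ?_
      have := (hσ i).ne'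
      rw [NNReal.coe_mul, NNReal.coe_mk, Real.coe_toNNReal _ (by positivity)]
      field_simp
  calc _ = (μY.map T (Ici (√s * PhiInv (1 - p)))).toReal := by
        rw [Measure.map_apply (by fun_prop) measurableSet_Ici]
        simp only [T, sub_sub]
        rfl
    _ = Phi ((s - √s * PhiInv (1 - p)) / √s) := by
        rw [hlaw, toReal_gaussianReal_Ici _ _ (by simpa using hs), Real.coe_toNNReal _ hs.le]
    _ = Phi (PhiInv p + √s) := by
        rw [PhiInv_one_sub hp]
        congr 1
        rw [div_eq_iff (Real.sqrt_pos.2 hs).ne']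
        linear_combination -Real.mul_self_sqrt hs.le
end
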